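/- The class GRLOWJ is not closed under intersection: there exist languages L1, L2 ∈ GRLOWJ with L1 ∩ L2 ∉ GRLOWJ. -/

import Mathlib

/-!
A complete DFA, read as an automaton whose rules are single letters, never jumps, so regular
languages such as `a*b*` lie in GRLOWJ. The one-state automaton deleting `ab` or `ba` accepts
exactly the words with as many `a`s as `b`s: such a word, if nonempty, contains one of the two
factors right after a constant block, which is skipped.

The intersection is `{aⁿbⁿ}`. Along any accepting run the rule words used, concatenated, form a
permutation of the input that is accepted without jumps. For `aᴺbᴺ` with `N` large this
permutation is `aᴺbᴺ` itself, and by pigeonhole a loop occurs among its first rule words, which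
read only `a`s. Cutting the loop out leaves an accepted word with fewer `a`s than `b`s.
-/

open List

/-- Two-letter alphabet. -/
inductive AB : Type | a | b
  deriving DecidableEq, Repr

/-- Three-letter alphabet. -/
inductive ABC : Type | a | b | c
  deriving DecidableEq, Repr

instance : Fintype AB := ⟨⟨{AB.a, AB.b}, by decide⟩, by intro x; cases x <;> decide⟩
instance : Fintype ABC := ⟨⟨{ABC.a, ABC.b, ABC.c}, by decide⟩, by intro x; cases x <;> decide⟩

/-- The Dyck language over the two designated letters `a` (open) and `b` (close):
balanced words using only `a` and `b`. -/
def Dyck {α : Type} [DecidableEq α] (a b : α) : Set (List α) :=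
  {w | (∀ x ∈ w, x = a ∨ x = b) ∧ w.count a = w.count b ∧
       ∀ u, u <+: w → u.count b ≤ u.count a}

/-- `u` contains no word from `S` as a subword (infix). -/
def NoSub {α : Type} (S : Set (List α)) (u : List α) : Prop :=
  ¬ ∃ w ∈ S, w <:+: u

/-! ### Right one-way jumping finite automata -/

structure ROWJFA (α σ : Type) where
  start : σ
  accept : Set σ
  rules : Set (σ × α × σ)
  det : ∀ p a q q', (p, a, q) ∈ rules → (p, a, q') ∈ rules → q = q'

namespace ROWJFA
variable {α σ : Type}

def sig (A : ROWJFA α σ) (p : σ) : Set α := {a | ∃ q, (p, a, q) ∈ A.rules}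

/-- `p x a y ↷ q y x` when `(p,a,q) ∈ R` and `x ∈ (Σ∖Σ_p)*`. -/
inductive Step (A : ROWJFA α σ) : σ × List α → σ × List α → Prop
  | jump {p q : σ} {a : α} (x y : List α) :
      (p, a, q) ∈ A.rules → (∀ b ∈ x, b ∉ A.sig p) →
      Step A (p, x ++ a :: y) (q, y ++ x)

def language (A : ROWJFA α σ) : Set (List α) :=
  {w | ∃ qf ∈ A.accept, Relation.ReflTransGen (Step A) (A.start, w) (qf, [])}

end ROWJFA

def ROWJ {α : Type} (L : Set (List α)) : Prop :=
  ∃ (σ : Type) (_ : Finite σ) (A : ROWJFA α σ), A.language = L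

/-! ### Left one-way jumping finite automata -/

structure LOWJFA (α σ : Type) where
  start : σ
  accept : Set σ
  /-- A rule `(q, a, p)` means: from state `p`, delete `a`, move to state `q`. -/
  rules : Set (σ × α × σ)
  det : ∀ p a q q', (q, a, p) ∈ rules → (q', a, p) ∈ rules → q = q'

namespace LOWJFA
variable {α σ : Type}

def sig (A : LOWJFA α σ) (p : σ) : Set α := {a | ∃ q, (q, a, p) ∈ A.rules}

/-- `x y q ↶ y a x p` when `(q,a,p) ∈ R` and `x ∈ (Σ∖Σ_p)*`;
configurations are in `Σ* Q`. -/
inductive Step (A : LOWJFA α σ) : List α × σ → List α × σ → Prop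
  | jump {p q : σ} {a : α} (x y : List α) :
      (q, a, p) ∈ A.rules → (∀ b ∈ x, b ∉ A.sig p) →
      Step A (y ++ a :: x, p) (x ++ y, q)

def language (A : LOWJFA α σ) : Set (List α) :=
  {w | ∃ qf ∈ A.accept, Relation.ReflTransGen (Step A) (w, A.start) ([], qf)}

end LOWJFA

def LOWJ {α : Type} (L : Set (List α)) : Prop :=
  ∃ (σ : Type) (_ : Finite σ) (A : LOWJFA α σ), A.language = L

/-! ### Generalized right linear one-way jumping finite automata -/

structure GRLOWJFA (α σ : Type) where
  start : σ
  accept : Set σ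
  rules : Set (σ × List α × σ)
  finite : rules.Finite
  ne : ∀ r ∈ rules, r.2.1 ≠ ([] : List α)
  det : ∀ p w q q', (p, w, q) ∈ rules → (p, w, q') ∈ rules → q = q'

namespace GRLOWJFA
variable {α σ : Type}

def sig (A : GRLOWJFA α σ) (p : σ) : Set (List α) := {w | ∃ q, (p, w, q) ∈ A.rules}

/-- Configurations are triples `(t, p, v)` representing `t p v ∈ Σ* Q Σ*`. -/
inductive Step (A : GRLOWJFA α σ) :
    List α × σ × List α → List α × σ × List α → Prop
  /-- `t p u x v ↷ t u q v`. -/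
  | rule {p q : σ} {x : List α} (t u v : List α) :
      (p, x, q) ∈ A.rules →
      NoSub (A.sig p) u →
      (¬ ∃ u₂ x₁ : List α, u₂ ≠ [] ∧ x₁ ≠ [] ∧ u₂ <:+ u ∧ x₁ <+: x ∧ u₂ ++ x₁ = x) →
      Step A (t, p, u ++ x ++ v) (t ++ u, q, v)
  /-- `x p y ↷ p x y`. -/
  | ret {p : σ} (x y : List α) :
      x ≠ [] → NoSub (A.sig p) y →
      Step A (x, p, y) ([], p, x ++ y)

def language (A : GRLOWJFA α σ) : Set (List α) :=
  {w | ∃ qf ∈ A.accept, Relation.ReflTransGen (Step A) ([], A.start, w) ([], qf, [])}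

end GRLOWJFA

def GRLOWJ {α : Type} (L : Set (List α)) : Prop :=
  ∃ (σ : Type) (_ : Finite σ) (A : GRLOWJFA α σ), A.language = L

/-! ### Generalized left linear one-way jumping finite automata -/

structure GLLOWJFA (α σ : Type) where
  start : σ
  accept : Set σ
  /-- A rule `(q, w, p)` means: from state `p`, delete `w`, move to state `q`. -/
  rules : Set (σ × List α × σ)
  finite : rules.Finite
  ne : ∀ r ∈ rules, r.2.1 ≠ ([] : List α)
  det : ∀ p w q q', (q, w, p) ∈ rules → (q', w, p) ∈ rules → q = q'

namespace GLLOWJFA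
variable {α σ : Type}

def sig (A : GLLOWJFA α σ) (p : σ) : Set (List α) := {w | ∃ q, (q, w, p) ∈ A.rules}

/-- Configurations are triples `(v, p, t)` representing `v p t ∈ Σ* Q Σ*`. -/
inductive Step (A : GLLOWJFA α σ) :
    List α × σ × List α → List α × σ × List α → Prop
  /-- `v q u t ↶ v x u p t`. -/
  | rule {p q : σ} {x : List α} (t u v : List α) :
      (q, x, p) ∈ A.rules →
      NoSub (A.sig p) u →
      (¬ ∃ x₂ u₁ : List α, x₂ ≠ [] ∧ u₁ ≠ [] ∧ x₂ <:+ x ∧ u₁ <+: u ∧ x₂ ++ u₁ = x) →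
      Step A (v ++ x ++ u, p, t) (v, q, u ++ t)
  /-- `y x p ↶ y p x`. -/
  | ret {p : σ} (x y : List α) :
      x ≠ [] → NoSub (A.sig p) y →
      Step A (y, p, x) (y ++ x, p, [])

def language (A : GLLOWJFA α σ) : Set (List α) :=
  {w | ∃ qf ∈ A.accept, Relation.ReflTransGen (Step A) (w, A.start, []) ([], qf, [])}

end GLLOWJFA

def GLLOWJ {α : Type} (L : Set (List α)) : Prop :=
  ∃ (σ : Type) (_ : Finite σ) (A : GLLOWJFA α σ), A.language = L

open Relation

theorem List.length_flatten_le_mul {α : Type} {l : List (List α)} {K : ℕ}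
    (h : ∀ x ∈ l, x.length ≤ K) : l.flatten.length ≤ l.length * K := by
  rw [List.length_flatten]
  simpa using List.sum_le_card_nsmul (l.map List.length) K (by simpa using h)

namespace GRLOWJFA

variable {α σ : Type} {A : GRLOWJFA α σ}

theorem noSub_sig_nil (A : GRLOWJFA α σ) (p : σ) : NoSub (A.sig p) [] := by
  rintro ⟨w, ⟨q, hq⟩, hw⟩
  exact A.ne _ hq (List.infix_nil.mp hw)

theorem step_of_mem_rules (t v : List α) {p q : σ} {x : List α} (h : (p, x, q) ∈ A.rules) :
    Step A (t, p, x ++ v) (t, q, v) := by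
  simpa using Step.rule (A := A) t [] v h (A.noSub_sig_nil p)
    fun ⟨_, _, hu, _, hs, _⟩ => hu (List.suffix_nil.mp hs)

theorem exists_length_le (A : GRLOWJFA α σ) :
    ∃ K, ∀ p x q, (p, x, q) ∈ A.rules → x.length ≤ K := by
  obtain ⟨K, hK⟩ := (A.finite.image fun r => r.2.1.length).bddAbove
  exact ⟨K, fun p x q h => hK ⟨_, h, rfl⟩⟩

inductive Path (A : GRLOWJFA α σ) : σ → List (List α) → σ → Prop
  | nil (p : σ) : Path A p [] p
  | cons {p q r : σ} {x : List α} {l : List (List α)} :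
      (p, x, q) ∈ A.rules → Path A q l r → Path A p (x :: l) r

namespace Path

variable {p q r : σ} {l l' : List (List α)}

theorem append (h : Path A p l q) (h' : Path A q l' r) : Path A p (l ++ l') r := by
  induction h with
  | nil => exact h'
  | cons hx _ ih => exact cons hx (ih h')

theorem exists_take_drop (h : Path A p l r) (n : ℕ) :
    ∃ s, Path A p (l.take n) s ∧ Path A s (l.drop n) r := by
  induction h generalizing n with
  | nil p => exact ⟨p, by simpa using nil p, by simpa using nil p⟩
  | @cons p _ _ _ _ hx h ih =>
    cases n with
    | zero => exact ⟨p, nil p, cons hx h⟩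
    | succ n =>
      obtain ⟨s, h₁, h₂⟩ := ih n
      exact ⟨s, cons hx h₁, h₂⟩

theorem exists_mem_rules (h : Path A p l r) {x : List α} (hx : x ∈ l) :
    ∃ p' q', (p', x, q') ∈ A.rules := by
  induction h with
  | nil => cases hx
  | cons hy _ ih =>
    rcases List.mem_cons.mp hx with rfl | hx
    exacts [⟨_, _, hy⟩, ih hx]

theorem reflTransGen (h : Path A p l r) :
    ReflTransGen (Step A) ([], p, l.flatten) ([], r, []) := by
  induction h with
  | nil => exact .refl
  | cons hx _ ih => exact .head (step_of_mem_rules [] _ hx) ih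

theorem exists_remove_loop [Finite σ] (h : Path A p l r) (hl : Nat.card σ ≤ l.length) :
    ∃ l₁ l₂ l₃, l = l₁ ++ l₂ ++ l₃ ∧ l₂ ≠ [] ∧ (l₁ ++ l₂).length ≤ Nat.card σ ∧
      Path A p (l₁ ++ l₃) r := by
  have := Fintype.ofFinite σ
  choose f hf using fun i : Fin (Nat.card σ + 1) => h.exists_take_drop i
  obtain ⟨i, j, hij, hfij⟩ := Fintype.exists_ne_map_eq_of_card_lt f
    (by simp [Nat.card_eq_fintype_card])
  wlog hlt : i < j generalizing i j
  · exact this j i hij.symm hfij.symm (lt_of_le_of_ne (not_lt.mp hlt) hij.symm)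
  have hlt : (i : ℕ) < j := hlt
  have hj : (j : ℕ) ≤ Nat.card σ := Nat.lt_succ_iff.mp j.isLt
  have htake : l.take i ++ (l.take j).drop i = l.take j := by
    conv_rhs => rw [← List.take_append_drop i (l.take j), List.take_take, min_eq_left hlt.le]
  refine ⟨l.take i, (l.take j).drop i, l.drop j, ?_, ?_, ?_, ?_⟩
  · rw [htake, List.take_append_drop]
  · simp only [ne_eq, List.drop_eq_nil_iff, List.length_take]
    omega
  · rw [htake, List.length_take]
    omega
  · exact (hf i).1.append (hfij ▸ (hf j).2)

end Path

theorem exists_path_of_reflTransGen {c : List α × σ × List α} {qf : σ}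
    (h : ReflTransGen (Step A) c ([], qf, [])) :
    ∃ l, Path A c.2.1 l qf ∧ l.flatten ~ c.1 ++ c.2.2 := by
  induction h using ReflTransGen.head_induction_on with
  | refl => exact ⟨[], .nil qf, by simp⟩
  | head hstep _ ih =>
    obtain ⟨l, hl, hperm⟩ := ih
    cases hstep with
    | rule t u v hx _ _ =>
      refine ⟨_ :: l, .cons hx hl, ?_⟩
      simpa using (hperm.append_left _).trans (List.perm_append_comm_assoc _ _ _)
    | ret x y _ _ => exact ⟨l, hl, by simpa using hperm⟩

theorem Path.flatten_mem_language {l : List (List α)} {qf : σ} (h : Path A A.start l qf)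
    (hqf : qf ∈ A.accept) : l.flatten ∈ A.language :=
  ⟨qf, hqf, h.reflTransGen⟩

theorem exists_path_of_mem_language {w : List α} (hw : w ∈ A.language) :
    ∃ qf ∈ A.accept, ∃ l, Path A A.start l qf ∧ l.flatten ~ w := by
  obtain ⟨qf, hqf, hrun⟩ := hw
  exact ⟨qf, hqf, exists_path_of_reflTransGen hrun⟩

theorem Path.exists_remove_loop_of_length_flatten [Finite σ] {p r : σ} {l : List (List α)}
    {K : ℕ} (hK : ∀ p x q, (p, x, q) ∈ A.rules → x.length ≤ K) (h : Path A p l r)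
    (hl : Nat.card σ * K < l.flatten.length) :
    ∃ l₁ l₂ l₃, l = l₁ ++ l₂ ++ l₃ ∧ l₂.flatten ≠ [] ∧
      (l₁ ++ l₂).flatten.length ≤ Nat.card σ * K ∧ Path A p (l₁ ++ l₃) r := by
  have hwords : ∀ x ∈ l, x ≠ [] ∧ x.length ≤ K := fun x hx =>
    let ⟨_, _, hx⟩ := h.exists_mem_rules hx
    ⟨A.ne _ hx, hK _ _ _ hx⟩
  have hlen : Nat.card σ ≤ l.length :=
    (Nat.lt_of_mul_lt_mul_right
      (hl.trans_le (List.length_flatten_le_mul fun x hx => (hwords x hx).2))).le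
  obtain ⟨l₁, l₂, l₃, rfl, hl₂, hl₁₂, hpath⟩ := h.exists_remove_loop hlen
  refine ⟨l₁, l₂, l₃, rfl, ?_, ?_, hpath⟩
  · obtain ⟨x, hx⟩ := List.exists_mem_of_ne_nil l₂ hl₂
    rw [Ne, List.flatten_eq_nil_iff]
    exact fun hnil => (hwords x (by simp [hx])).1 (hnil x hx)
  · calc (l₁ ++ l₂).flatten.length
        ≤ (l₁ ++ l₂).length * K :=
          List.length_flatten_le_mul fun x hx => (hwords x (List.mem_append_left _ hx)).2
      _ ≤ Nat.card σ * K := Nat.mul_le_mul_right K hl₁₂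

end GRLOWJFA

namespace DFA

variable {α σ : Type} [Finite α] [Finite σ]

def toGRLOWJFA (M : DFA α σ) : GRLOWJFA α σ where
  start := M.start
  accept := M.accept
  rules := Set.range fun pc : σ × α => (pc.1, [pc.2], M.step pc.1 pc.2)
  finite := Set.finite_range _
  ne := by rintro _ ⟨pc, rfl⟩; simp
  det := by
    rintro p w q q' ⟨⟨p₁, c₁⟩, h₁⟩ ⟨⟨p₂, c₂⟩, h₂⟩
    simp only [Prod.mk.injEq] at h₁ h₂
    obtain ⟨rfl, rfl, rfl⟩ := h₁
    obtain ⟨rfl, h, rfl⟩ := h₂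
    simp_all

variable (M : DFA α σ)

theorem mem_toGRLOWJFA_rules {p q : σ} {x : List α} :
    (p, x, q) ∈ M.toGRLOWJFA.rules ↔ ∃ c, x = [c] ∧ q = M.step p c := by
  constructor
  · rintro ⟨⟨p', c⟩, h⟩
    simp only [Prod.mk.injEq] at h
    obtain ⟨rfl, rfl, rfl⟩ := h
    exact ⟨c, rfl, rfl⟩
  · rintro ⟨c, rfl, rfl⟩
    exact ⟨(p, c), rfl⟩

theorem toGRLOWJFA_step_nil {p : σ} {v : List α} {c : List α × σ × List α}
    (h : GRLOWJFA.Step M.toGRLOWJFA ([], p, v) c) :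
    ∃ a v', v = a :: v' ∧ c = ([], M.step p a, v') := by
  cases h with
  | rule t u v hx hu _ =>
    obtain ⟨a, rfl, rfl⟩ := (M.mem_toGRLOWJFA_rules).mp hx
    obtain rfl : u = [] := by
      cases u with
      | nil => rfl
      | cons b u =>
        exact (hu ⟨[b], ⟨_, (M.mem_toGRLOWJFA_rules).mpr ⟨b, rfl, rfl⟩⟩, [], u, rfl⟩).elim
    exact ⟨a, v, rfl, rfl⟩
  | ret x y hx _ => exact (hx rfl).elim

theorem reflTransGen_toGRLOWJFA_iff {p q : σ} {v : List α} :
    ReflTransGen (GRLOWJFA.Step M.toGRLOWJFA) ([], p, v) ([], q, []) ↔ M.evalFrom p v = q := by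
  induction v generalizing p with
  | nil =>
    refine ⟨fun h => ?_, fun h => h ▸ .refl⟩
    rcases h.cases_head with h | ⟨c, hc, -⟩
    · exact (congrArg (·.2.1) h :)
    · obtain ⟨a, v', h, -⟩ := M.toGRLOWJFA_step_nil hc
      cases h
  | cons a v ih =>
    rw [evalFrom_cons, ← ih]
    refine ⟨fun h => ?_, fun h => .head (GRLOWJFA.step_of_mem_rules [] v
      ((M.mem_toGRLOWJFA_rules).mpr ⟨a, rfl, rfl⟩)) h⟩
    rcases h.cases_head with h | ⟨c, hc, h⟩
    · cases h
    · obtain ⟨b, v', hv, rfl⟩ := M.toGRLOWJFA_step_nil hc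
      cases hv
      exact h

theorem language_toGRLOWJFA : M.toGRLOWJFA.language = M.accepts := by
  ext v
  refine ⟨fun ⟨_, hq, hv⟩ => ?_, fun hv => ⟨_, hv, (M.reflTransGen_toGRLOWJFA_iff).mpr rfl⟩⟩
  rw [← (M.reflTransGen_toGRLOWJFA_iff).mp hv] at hq
  exact hq

end DFA

theorem Language.IsRegular.grlowj {α : Type} [Finite α] {L : Language α} (hL : L.IsRegular) :
    GRLOWJ L := by
  obtain ⟨σ, _, M, rfl⟩ := hL
  exact ⟨σ, inferInstance, M.toGRLOWJFA, M.language_toGRLOWJFA⟩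

def abStar : Set (List AB) := {w | ∃ n m, w = replicate n AB.a ++ replicate m AB.b}

def equalCount : Set (List AB) := {w | w.count AB.a = w.count AB.b}

theorem cons_a_mem_abStar {w : List AB} : AB.a :: w ∈ abStar ↔ w ∈ abStar := by
  constructor
  · rintro ⟨_ | n, m, h⟩
    · cases m <;> simp [replicate_succ] at h
    · exact ⟨n, m, by simpa [replicate_succ] using h⟩
  · rintro ⟨n, m, rfl⟩
    exact ⟨n + 1, m, rfl⟩

theorem cons_b_mem_abStar {w : List AB} : AB.b :: w ∈ abStar ↔ ∀ c ∈ w, c = AB.b := by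
  constructor
  · rintro ⟨_ | n, _ | m, h⟩ <;> simp [replicate_succ] at h
    exact fun c hc => List.eq_of_mem_replicate (h ▸ hc)
  · intro h
    exact ⟨0, w.length + 1, by rw [replicate_succ, ← List.eq_replicate_iff.mpr ⟨rfl, h⟩]; rfl⟩

inductive ABStarPhase | readA | readB | dead
  deriving DecidableEq

instance : Fintype ABStarPhase :=
  ⟨⟨{.readA, .readB, .dead}, by decide⟩, fun x => by cases x <;> decide⟩

def abStarDFA : DFA AB ABStarPhase where
  step
    | .readA, .a => .readA
    | .readA, .b => .readB
    | .readB, .b => .readB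
    | _, _ => .dead
  start := .readA
  accept := {.readA, .readB}

theorem abStarDFA_evalFrom_dead (w : List AB) : abStarDFA.evalFrom .dead w = .dead := by
  induction w with
  | nil => rfl
  | cons c w ih => cases c <;> exact ih

theorem abStarDFA_evalFrom_readB (w : List AB) :
    abStarDFA.evalFrom .readB w ∈ abStarDFA.accept ↔ ∀ c ∈ w, c = AB.b := by
  induction w with
  | nil => simp [abStarDFA]
  | cons c w ih =>
    cases c
    · change abStarDFA.evalFrom .dead w ∈ _ ↔ _
      rw [abStarDFA_evalFrom_dead]
      simp [abStarDFA]
    · exact ih.trans (by simp)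

theorem abStarDFA_accepts : abStarDFA.accepts = abStar := by
  suffices ∀ w, abStarDFA.evalFrom .readA w ∈ abStarDFA.accept ↔ w ∈ abStar from Set.ext this
  intro w
  induction w with
  | nil => exact ⟨fun _ => ⟨0, 0, rfl⟩, fun _ => by simp [abStarDFA]⟩
  | cons c w ih =>
    cases c
    · exact ih.trans cons_a_mem_abStar.symm
    · exact (abStarDFA_evalFrom_readB w).trans cons_b_mem_abStar.symm

theorem abStar_inter_equalCount :
    abStar ∩ equalCount = {w | ∃ n, w = replicate n AB.a ++ replicate n AB.b} := by
  ext w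
  constructor
  · rintro ⟨⟨n, m, rfl⟩, h⟩
    simp only [equalCount, Set.mem_ofPred_eq, List.count_append, List.count_replicate_self,
      List.count_replicate, beq_iff_eq, reduceCtorEq, ↓reduceIte, add_zero, zero_add] at h
    exact ⟨n, by rw [h]⟩
  · rintro ⟨n, rfl⟩
    exact ⟨⟨n, n, rfl⟩, by simp [equalCount, List.count_replicate]⟩

theorem List.exists_cons_eq_replicate_append {α : Type} {c : α} {v : List α}
    (h : ∃ e ∈ v, e ≠ c) : ∃ k e v', e ≠ c ∧ c :: v = replicate k c ++ c :: e :: v' := by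
  induction v with
  | nil => simp at h
  | cons y v ih =>
    by_cases hy : y = c
    · subst hy
      obtain ⟨k, e, v', he, hv⟩ := ih (by simpa using h)
      exact ⟨k + 1, e, v', he, by rw [hv]; rfl⟩
    · exact ⟨0, y, v, hy, rfl⟩

theorem not_exists_overlap_pair {α : Type} {c e : α} (hce : c ≠ e) (u : List α) :
    ¬ ∃ u₂ x₁ : List α, u₂ ≠ [] ∧ x₁ ≠ [] ∧ u₂ <:+ u ∧ x₁ <+: [c, e] ∧ u₂ ++ x₁ = [c, e] := by
  rintro ⟨_ | ⟨d, _ | ⟨d', u₂⟩⟩, _ | ⟨f, x₁⟩, hu₂, hx₁, -, hpre, heq⟩ <;> simp_all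

theorem AB.eq_nil_of_count_eq_zero {w : List AB} (ha : w.count AB.a = 0) (hb : w.count AB.b = 0) :
    w = [] :=
  List.eq_nil_iff_forall_not_mem.mpr fun c hc => by
    cases c <;> simp_all [List.count_eq_zero]

def equalCountGRLOWJFA : GRLOWJFA AB Unit where
  start := ()
  accept := {()}
  rules := {((), [AB.a, AB.b], ()), ((), [AB.b, AB.a], ())}
  finite := (Set.finite_singleton _).insert _
  ne := by rintro _ (rfl | rfl) <;> simp
  det := fun _ _ _ _ _ _ => rfl

namespace equalCountGRLOWJFA

open GRLOWJFA

theorem count_of_mem_rules {p q : Unit} {x : List AB} (h : (p, x, q) ∈ equalCountGRLOWJFA.rules) :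
    x.count AB.a = 1 ∧ x.count AB.b = 1 := by
  simp only [equalCountGRLOWJFA, Set.mem_insert_iff, Set.mem_singleton_iff, Prod.mk.injEq] at h
  rcases h with ⟨-, rfl, -⟩ | ⟨-, rfl, -⟩ <;> decide

theorem noSub_of_not_mem {d : AB} {v : List AB} (hd : d ∉ v) :
    NoSub (equalCountGRLOWJFA.sig ()) v := by
  rintro ⟨x, ⟨_, hx⟩, hxv⟩
  obtain ⟨ha, hb⟩ := count_of_mem_rules hx
  refine hd (hxv.subset (List.count_pos_iff.mp ?_))
  cases d <;> omega

theorem exists_step_of_mem (t : List AB) {v : List AB} (ha : AB.a ∈ v) (hb : AB.b ∈ v) :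
    ∃ t' v', Step equalCountGRLOWJFA (t, (), v) (t', (), v') ∧
      (t' ++ v').count AB.a + 1 = (t ++ v).count AB.a ∧
      (t' ++ v').count AB.b + 1 = (t ++ v).count AB.b := by
  obtain ⟨c, v, rfl⟩ := List.exists_cons_of_ne_nil (List.ne_nil_of_mem ha)
  have hne : ∃ e ∈ v, e ≠ c := by
    cases c
    · exact ⟨_, (List.mem_cons.mp hb).resolve_left (by decide), by decide⟩
    · exact ⟨_, (List.mem_cons.mp ha).resolve_left (by decide), by decide⟩
  obtain ⟨k, e, v', hec, hv⟩ := List.exists_cons_eq_replicate_append hne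
  have hrule : ((), [c, e], ()) ∈ equalCountGRLOWJFA.rules := by
    cases c <;> cases e <;> simp_all [equalCountGRLOWJFA]
  have hstep := Step.rule t (replicate k c) v' hrule
    (noSub_of_not_mem fun he => hec (List.eq_of_mem_replicate he)) (not_exists_overlap_pair hec.symm _)
  have hsplit : c :: v = replicate k c ++ [c, e] ++ v' := by simp [hv]
  obtain ⟨hca, hcb⟩ := count_of_mem_rules hrule
  refine ⟨_, _, hsplit ▸ hstep, ?_⟩
  simp only [hsplit, List.count_append]
  omega

theorem reflTransGen_of_count_eq (n : ℕ) (t v : List AB) (ha : (t ++ v).count AB.a = n)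
    (hb : (t ++ v).count AB.b = n) :
    ReflTransGen (Step equalCountGRLOWJFA) (t, (), v) ([], (), []) := by
  induction n generalizing t v with
  | zero =>
    obtain ⟨rfl, rfl⟩ := List.append_eq_nil_iff.mp (AB.eq_nil_of_count_eq_zero ha hb)
    exact .refl
  | succ n ih =>
    by_cases hv : AB.a ∈ v ∧ AB.b ∈ v
    · obtain ⟨t', v', hstep, ha', hb'⟩ := exists_step_of_mem t hv.1 hv.2
      exact .head hstep (ih t' v' (by omega) (by omega))
    · have hd : ∃ d, d ∉ v := by
        by_contra! h
        exact hv ⟨h _, h _⟩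
      have ht : t ≠ [] := by
        rintro rfl
        rw [List.nil_append] at ha hb
        exact hv ⟨List.count_pos_iff.mp (by omega), List.count_pos_iff.mp (by omega)⟩
      obtain ⟨t', v', hstep, ha', hb'⟩ := exists_step_of_mem []
        (List.count_pos_iff.mp (by omega : 0 < (t ++ v).count AB.a))
        (List.count_pos_iff.mp (by omega : 0 < (t ++ v).count AB.b))
      exact .head (Step.ret t v ht (noSub_of_not_mem hd.choose_spec))
        (.head hstep (ih t' v' (by simp_all) (by simp_all)))

theorem language_eq : equalCountGRLOWJFA.language = equalCount := by
  ext w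
  constructor
  · intro hw
    obtain ⟨_, -, l, hl, hperm⟩ := exists_path_of_mem_language hw
    have hcount : ∀ x ∈ l, x.count AB.a = 1 ∧ x.count AB.b = 1 := fun x hx =>
      let ⟨_, _, h⟩ := hl.exists_mem_rules hx
      count_of_mem_rules h
    change w.count AB.a = w.count AB.b
    rw [← hperm.count_eq, ← hperm.count_eq, List.count_flatten, List.count_flatten,
      List.map_congr_left fun x hx => (hcount x hx).1,
      List.map_congr_left fun x hx => (hcount x hx).2]
  · intro hw
    exact ⟨(), rfl, reflTransGen_of_count_eq _ [] w rfl hw.symm⟩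

end equalCountGRLOWJFA

theorem List.IsPrefix.eq_of_mem_of_replicate_append {α : Type} {u v : List α} {c d : α} {n : ℕ}
    (h : u <+: replicate n c ++ v) (hu : u.length ≤ n) (hd : d ∈ u) : d = c :=
  List.eq_of_mem_replicate
    ((List.prefix_of_prefix_length_le h (List.prefix_append _ _) (by simpa)).subset hd)

theorem not_grlowj_replicate_append_replicate :
    ¬ GRLOWJ {w : List AB | ∃ n, w = replicate n AB.a ++ replicate n AB.b} := by
  rintro ⟨σ, _, A, hA⟩
  have hcount : ∀ w ∈ A.language, w.count AB.a = w.count AB.b := by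
    rw [hA]
    rintro _ ⟨n, rfl⟩
    simp [List.count_replicate]
  obtain ⟨K, hK⟩ := A.exists_length_le
  set N := Nat.card σ * K + 1
  obtain ⟨qf, hqf, l, hl, hperm⟩ := GRLOWJFA.exists_path_of_mem_language
    (hA ▸ ⟨N, rfl⟩ : replicate N AB.a ++ replicate N AB.b ∈ A.language)
  have hflat : l.flatten = replicate N AB.a ++ replicate N AB.b := by
    obtain ⟨n, hn⟩ : l.flatten ∈ {w : List AB | ∃ n, w = replicate n AB.a ++ replicate n AB.b} :=
      hA ▸ hl.flatten_mem_language hqf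
    have := hperm.count_eq AB.a
    simp only [hn, List.count_append, List.count_replicate_self, List.count_replicate, beq_iff_eq,
      reduceCtorEq, ↓reduceIte, add_zero] at this
    rw [hn, this]
  obtain ⟨l₁, l₂, l₃, rfl, hl₂, hl₁₂, hpath⟩ :=
    hl.exists_remove_loop_of_length_flatten hK (by simp only [hflat, List.length_append, List.length_replicate]; omega)
  have hprefix : ∀ c ∈ (l₁ ++ l₂).flatten, c = AB.a :=
    fun c hc => List.IsPrefix.eq_of_mem_of_replicate_append ⟨l₃.flatten, by rw [← hflat]; simp⟩
      (by omega) hc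
  obtain ⟨d, hd⟩ := List.exists_mem_of_ne_nil _ hl₂
  have ha₂ : 0 < l₂.flatten.count AB.a :=
    List.count_pos_iff.mpr (hprefix d (by simp [hd]) ▸ hd)
  have hb₁₂ : (l₁ ++ l₂).flatten.count AB.b = 0 :=
    List.count_eq_zero.mpr fun hb => absurd (hprefix _ hb) (by decide)
  have hpumped := hcount _ (hpath.flatten_mem_language hqf)
  have hca := congrArg (List.count AB.a) hflat
  have hcb := congrArg (List.count AB.b) hflat
  simp only [List.append_assoc, List.flatten_append, List.count_append, List.count_replicate_self,
    List.count_replicate, beq_iff_eq, reduceCtorEq, ↓reduceIte, add_zero, zero_add,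
    Nat.add_eq_zero_iff] at hca hcb hb₁₂ hpumped
  omega

theorem stmt_17 :
    ∃ L1 L2 : Set (List AB), GRLOWJ L1 ∧ GRLOWJ L2 ∧ ¬ GRLOWJ (L1 ∩ L2) :=
  ⟨abStar, equalCount,
    Language.IsRegular.grlowj ⟨ABStarPhase, inferInstance, abStarDFA, abStarDFA_accepts⟩,
    ⟨Unit, inferInstance, equalCountGRLOWJFA, equalCountGRLOWJFA.language_eq⟩,
    abStar_inter_equalCount ▸ not_grlowj_replicate_append_replicate⟩
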